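/- arXiv:2408.02856 — 3 statements merged into one kernel-verified Lean document; each statement's English description precedes it below -/
import Mathlib

section
/- Let (e_n), (ρ_n), (γ_n), (σ_n) be sequences of nonnegative real numbers such that e_{n+1} ≤ σ_n + ρ_n·Σ_{i=0}^{n−1} e_i + (1+γ_n)·e_n for all n ∈ ℕ. Then for every n ∈ ℕ one has e_n ≤ (e_0 + Σ_{i=0}^{n−1} σ_i)·exp(Σ_{i=0}^{n−1} (i·ρ_i + γ_i)). -/
/-!
Bound every `e n` by `B n = (e 0 + ∑_{i<n} σ i) * exp (∑_{i<n} (i ρ i + γ i))`, which is monotone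
in `n`. If `e i ≤ B n` for all `i ≤ n`, then `∑_{i<n} e i ≤ n B n`, so the recursion gives
`e (n+1) ≤ σ n + (1 + n ρ n + γ n) B n`, and `1 + x ≤ exp x` turns this into `e (n+1) ≤ B (n+1)`.
-/

namespace GronwallPaper

open Finset Real

theorem monotone_sum_range_of_nonneg {M : Type*} [AddCommMonoid M] [PartialOrder M]
    [IsOrderedAddMonoid M] {f : ℕ → M} (hf : ∀ n, 0 ≤ f n) :
    Monotone fun n => ∑ i ∈ range n, f i :=
  monotone_nat_of_le_succ fun n => by
    simpa only [sum_range_succ] using le_add_of_nonneg_right (hf n)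

theorem le_of_monotone_of_step {α : Type*} [Preorder α] {e B : ℕ → α} (hB : Monotone B)
    (h0 : e 0 ≤ B 0) (hstep : ∀ n, (∀ i ≤ n, e i ≤ B n) → e (n + 1) ≤ B (n + 1)) (n : ℕ) :
    e n ≤ B n := by
  suffices h : ∀ n, ∀ i ≤ n, e i ≤ B n from h n n le_rfl
  intro n
  induction n with
  | zero => simpa using h0
  | succ n ih =>
    intro i hi
    rcases Nat.le_succ_iff.1 hi with hi | rfl
    · exact (ih i hi).trans (hB n.le_succ)
    · exact hstep n ih

theorem add_one_add_mul_mul_exp_le {E S σ r : ℝ} (hE : 0 ≤ E) (hσ : 0 ≤ σ) (h : 0 ≤ S + r) :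
    σ + (1 + r) * (E * exp S) ≤ (E + σ) * exp (S + r) :=
  calc σ + (1 + r) * (E * exp S) ≤ σ * exp (S + r) + exp r * (E * exp S) := by
        gcongr
        · exact le_mul_of_one_le_right hσ (one_le_exp h)
        · linarith [add_one_le_exp r]
    _ = (E + σ) * exp (S + r) := by rw [exp_add]; ring

/-- **Discrete Gronwall inequality** (Proposition 2.2).
If nonnegative sequences satisfy
`e (n+1) ≤ σ n + ρ n * ∑_{i<n} e i + (1 + γ n) * e n` for all `n`, then
`e n ≤ (e 0 + ∑_{i<n} σ i) * exp (∑_{i<n} (i * ρ i + γ i))` for all `n`. -/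
theorem discrete_gronwall (e ρ γ σ : ℕ → ℝ)
    (he : ∀ n, 0 ≤ e n) (hρ : ∀ n, 0 ≤ ρ n) (hγ : ∀ n, 0 ≤ γ n) (hσ : ∀ n, 0 ≤ σ n)
    (hrec : ∀ n : ℕ, e (n + 1) ≤
      σ n + ρ n * (∑ i ∈ Finset.range n, e i) + (1 + γ n) * e n) :
    ∀ n : ℕ, e n ≤ (e 0 + ∑ i ∈ Finset.range n, σ i) *
      Real.exp (∑ i ∈ Finset.range n, ((i : ℝ) * ρ i + γ i)) := by
  set E : ℕ → ℝ := fun n => e 0 + ∑ i ∈ range n, σ i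
  set S : ℕ → ℝ := fun n => ∑ i ∈ range n, ((i : ℝ) * ρ i + γ i)
  have hrate : ∀ i : ℕ, 0 ≤ (i : ℝ) * ρ i + γ i := 
    fun i => add_nonneg (mul_nonneg i.cast_nonneg (hρ i)) (hγ i)
  have hE_nonneg : ∀ n, 0 ≤ E n := fun n => add_nonneg (he 0) (sum_nonneg fun i _ => hσ i)
  have hS_nonneg : ∀ n, 0 ≤ S n := fun n => sum_nonneg fun i _ => hrate i
  have hB : Monotone fun n => E n * exp (S n) :=
    (monotone_const.add (monotone_sum_range_of_nonneg hσ)).mul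
      (exp_monotone.comp (monotone_sum_range_of_nonneg hrate)) hE_nonneg fun _ => (exp_pos _).le
  refine le_of_monotone_of_step hB (by simp) fun n ih => ?_
  have hsum : ∑ i ∈ range n, e i ≤ n * (E n * exp (S n)) := by
    simpa using sum_le_card_nsmul (range n) e _ fun i hi => ih i (mem_range.1 hi).le
  calc e (n + 1) ≤ σ n + ρ n * (∑ i ∈ range n, e i) + (1 + γ n) * e n := hrec n
    _ ≤ σ n + ρ n * (n * (E n * exp (S n))) + (1 + γ n) * (E n * exp (S n)) := by
      have := hρ n; have := hγ n
      gcongr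
      exact ih n le_rfl
    _ = σ n + (1 + (n * ρ n + γ n)) * (E n * exp (S n)) := by ring
    _ ≤ (E n + σ n) * exp (S n + (n * ρ n + γ n)) :=
      add_one_add_mul_mul_exp_le (hE_nonneg n) (hσ n) (add_nonneg (hS_nonneg n) (hrate n))
    _ = E (n + 1) * exp (S (n + 1)) := by simp only [E, S, sum_range_succ]; ring

end GronwallPaper
end

section
/- Let T₀ < T, let ρ : [T₀,T] → ℝ≥0 be absolutely continuous, and let a, b₁, b₂ : [T₀,T] → ℝ≥0 be Lebesgue integrable. Assume ρ'(t) ≤ a(t) + b₁(t)·ρ(t) + b₂(t)·∫_{T₀}^{t} ρ(s) ds for a.e. t ∈ [T₀,T]. Then, with b(t) := max{b₁(t), b₂(t)}, for every t ∈ [T₀,T] one has ρ(t) ≤ ρ(T₀)·exp(∫_{T₀}^{t} (b(τ)+1) dτ) + ∫_{T₀}^{t} a(s)·exp(∫_{s}^{t} (b(τ)+1) dτ) ds. -/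
/-!
Put `u = ρ + ∫_{T₀}^· ρ`. As `ρ ≥ 0` and `∫ ρ ≥ 0`, the hypothesis gives
`u' = ρ' + ρ ≤ a + (b + 1) u` a.e., so the memory term disappears and `u` satisfies a linear
differential inequality. With the integrating factor `E = exp (-∫ (b + 1))` the function
`∫ a E - E u` has an a.e. nonnegative derivative; being absolutely continuous, it is
nondecreasing, which is the classical Gronwall bound for `u`, and `ρ ≤ u`.
-/

open MeasureTheory intervalIntegral Set Filter
open scoped NNReal

theorem LipschitzOnWith.comp_absolutelyContinuousOnInterval {X Y : Type*} [PseudoMetricSpace X]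
    [PseudoMetricSpace Y] {g : X → Y} {f : ℝ → X} {K : ℝ≥0} {s : Set X} {a b : ℝ}
    (hg : LipschitzOnWith K g s) (hf : AbsolutelyContinuousOnInterval f a b)
    (hfs : MapsTo f (uIcc a b) s) : AbsolutelyContinuousOnInterval (g ∘ f) a b := by
  unfold AbsolutelyContinuousOnInterval at hf ⊢
  apply squeeze_zero' ?_ ?_ (by simpa using hf.const_mul (K : ℝ))
  · exact Eventually.of_forall fun _ ↦ Finset.sum_nonneg fun _ _ ↦ dist_nonneg
  rw [eventually_inf_principal]
  filter_upwards with E hE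
  rw [Finset.mul_sum]
  gcongr with i hi
  exact hg.dist_le_mul _ (hfs (hE.1 i hi).1) _ (hfs (hE.1 i hi).2)

theorem AbsolutelyContinuousOnInterval.rexp {f : ℝ → ℝ} {a b : ℝ}
    (hf : AbsolutelyContinuousOnInterval f a b) :
    AbsolutelyContinuousOnInterval (fun x ↦ Real.exp (f x)) a b := by
  obtain ⟨C, hC⟩ := hf.exists_bound
  obtain ⟨K, hK⟩ := (Real.contDiff_exp (n := 1)).contDiffOn.exists_lipschitzOnWith one_ne_zero
    (convex_Icc (-C) C) isCompact_Icc
  exact hK.comp_absolutelyContinuousOnInterval hf fun x hx ↦ abs_le.1 (hC x hx)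

theorem AbsolutelyContinuousOnInterval.le_of_ae_deriv_nonneg {f : ℝ → ℝ} {a b : ℝ} (hab : a ≤ b)
    (hf : AbsolutelyContinuousOnInterval f a b) (hf' : ∀ᵐ x, x ∈ Icc a b → 0 ≤ deriv f x) :
    f a ≤ f b := by
  rw [← sub_nonneg, ← hf.integral_deriv_eq_sub]
  exact integral_nonneg_of_ae_restrict hab ((ae_restrict_iff' measurableSet_Icc).2 hf')

theorem AbsolutelyContinuousOnInterval.le_gronwall_of_ae_deriv_le {u c f : ℝ → ℝ} {a b : ℝ}
    (hab : a ≤ b) (hu : AbsolutelyContinuousOnInterval u a b)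
    (hc : IntervalIntegrable c volume a b) (hf : IntervalIntegrable f volume a b)
    (hu' : ∀ᵐ x, x ∈ Icc a b → deriv u x ≤ f x + c x * u x) :
    u b ≤ u a * Real.exp (∫ τ in a..b, c τ) + ∫ s in a..b, f s * Real.exp (∫ τ in s..b, c τ) := by
  set C := fun x ↦ ∫ τ in a..x, c τ
  set E := fun x ↦ Real.exp (-C x)
  have ha : a ∈ uIcc a b := left_mem_uIcc
  have hC : AbsolutelyContinuousOnInterval C a b :=
    hc.absolutelyContinuousOnInterval_intervalIntegral ha
  have hE : AbsolutelyContinuousOnInterval E a b := hC.neg.rexp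
  have hfE : IntervalIntegrable (fun x ↦ f x * E x) volume a b :=
    hf.mul_continuousOn hE.continuousOn
  have key : E b * u b ≤ u a + ∫ s in a..b, f s * E s := by
    set ψ := fun x ↦ (∫ s in a..x, f s * E s) - E x * u x
    have hψ : AbsolutelyContinuousOnInterval ψ a b :=
      (hfE.absolutelyContinuousOnInterval_intervalIntegral ha).sub (hE.mul hu)
    have hψ' : ∀ᵐ x, x ∈ Icc a b → 0 ≤ deriv ψ x := by
      filter_upwards [hc.ae_hasDerivAt_integral, hfE.ae_hasDerivAt_integral,
        hu.ae_differentiableAt, hu'] with x hCx hFx hux hu'x hx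
      have hx' : x ∈ uIcc a b := Icc_subset_uIcc hx
      have hψx : HasDerivAt ψ (f x * E x - (E x * -c x * u x + E x * deriv u x)) x :=
        (hFx hx' a ha).sub (((hCx hx' a ha).neg.exp).mul (hux hx').hasDerivAt)
      rw [hψx.deriv]
      have hEx : 0 < E x := Real.exp_pos _
      nlinarith [mul_le_mul_of_nonneg_left (hu'x hx) hEx.le]
    have hψab := hψ.le_of_ae_deriv_nonneg hab hψ'
    simp only [ψ, E, C, integral_same, neg_zero, Real.exp_zero] at hψab
    linarith
  have hCsub : ∀ s ∈ uIcc a b, ∫ τ in s..b, c τ = C b - C s := fun s hs ↦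
    (integral_interval_sub_left hc (hc.mono_set (uIcc_subset_uIcc_left hs))).symm
  calc u b = E b * u b * Real.exp (C b) := by
        rw [mul_right_comm, ← Real.exp_add, neg_add_cancel, Real.exp_zero, one_mul]
    _ ≤ (u a + ∫ s in a..b, f s * E s) * Real.exp (C b) := by gcongr
    _ = _ := by
      rw [add_mul, ← intervalIntegral.integral_mul_const]
      congr 1
      refine integral_congr fun s hs ↦ ?_
      simp only [E, hCsub s hs, Real.exp_sub, Real.exp_neg]
      field_simp

theorem le_gronwall_of_eq_add_integral {u u' c f : ℝ → ℝ} {a b : ℝ} (hab : a ≤ b)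
    (hu' : IntervalIntegrable u' volume a b) (hc : IntervalIntegrable c volume a b)
    (hf : IntervalIntegrable f volume a b) (hu : ∀ x ∈ Icc a b, u x = u a + ∫ s in a..x, u' s)
    (hle : ∀ᵐ x, x ∈ Icc a b → u' x ≤ f x + c x * u x) :
    u b ≤ u a * Real.exp (∫ τ in a..b, c τ) + ∫ s in a..b, f s * Real.exp (∫ τ in s..b, c τ) := by
  set v := fun x ↦ u a + ∫ s in a..x, u' s
  have hv : AbsolutelyContinuousOnInterval v a b :=
    contDiffOn_const.absolutelyContinuousOnInterval.add
      (hu'.absolutelyContinuousOnInterval_intervalIntegral left_mem_uIcc)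
  have hgronwall := hv.le_gronwall_of_ae_deriv_le hab hc hf ?_
  · simpa [v, ← hu b ⟨hab, le_rfl⟩] using hgronwall
  filter_upwards [hu'.ae_hasDerivAt_integral, hle] with x hv'x hlex hx
  rw [((hv'x (Icc_subset_uIcc hx) a left_mem_uIcc).const_add _).deriv,
    show v x = u x from (hu x hx).symm]
  exact hlex hx

theorem extended_gronwall_general (T₀ T : ℝ) (ρ ρ' a b₁ b₂ : ℝ → ℝ)
    (hρ0 : ∀ t ∈ Set.Icc T₀ T, 0 ≤ ρ t)
    (hρ'int : IntegrableOn ρ' (Set.Icc T₀ T))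
    (hAC : ∀ t ∈ Set.Icc T₀ T, ρ t = ρ T₀ + ∫ s in T₀..t, ρ' s)
    (haint : IntegrableOn a (Set.Icc T₀ T))
    (hb₁int : IntegrableOn b₁ (Set.Icc T₀ T))
    (hb₂int : IntegrableOn b₂ (Set.Icc T₀ T))
    (hineq : ∀ᵐ t ∂(volume.restrict (Set.Icc T₀ T)),
      ρ' t ≤ a t + b₁ t * ρ t + b₂ t * ∫ s in T₀..t, ρ s) :
    ∀ t ∈ Set.Icc T₀ T,
      ρ t ≤ ρ T₀ * Real.exp (∫ τ in T₀..t, (max (b₁ τ) (b₂ τ) + 1)) +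
        ∫ s in T₀..t, a s * Real.exp (∫ τ in s..t, (max (b₁ τ) (b₂ τ) + 1)) := by
  intro t ht
  have hsub : Icc T₀ t ⊆ Icc T₀ T := Icc_subset_Icc_right ht.2
  have hI {f : ℝ → ℝ} (hf : IntegrableOn f (Icc T₀ T)) : IntervalIntegrable f volume T₀ t :=
    (intervalIntegrable_iff_integrableOn_Icc_of_le ht.1).2 (hf.mono_set hsub)
  have hρ'I : IntervalIntegrable ρ' volume T₀ t := hI hρ'int
  have hρI : IntervalIntegrable ρ volume T₀ t :=
    ((hρ'I.absolutelyContinuousOnInterval_intervalIntegral left_mem_uIcc).continuousOn.const_add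
      _).congr (fun x hx ↦ hAC x (hsub (uIcc_of_le ht.1 ▸ hx))) |>.intervalIntegrable
  have hR {x} (hx : x ∈ Icc T₀ t) : 0 ≤ ∫ s in T₀..x, ρ s :=
    integral_nonneg hx.1 fun y hy ↦ hρ0 y ⟨hy.1, hy.2.trans (hx.2.trans ht.2)⟩
  have hcI : IntervalIntegrable (fun τ ↦ max (b₁ τ) (b₂ τ) + 1) volume T₀ t :=
    (hI (hb₁int.sup hb₂int)).add intervalIntegrable_const
  have key := le_gronwall_of_eq_add_integral (u := fun x ↦ ρ x + ∫ s in T₀..x, ρ s) ht.1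
    (hρ'I.add hρI) hcI (hI haint) ?_ ?_
  · simp only [integral_same, add_zero] at key
    linarith [hR ⟨ht.1, le_rfl⟩]
  · intro x hx
    have hsub' : uIcc T₀ x ⊆ uIcc T₀ t := uIcc_subset_uIcc_left (Icc_subset_uIcc hx)
    rw [integral_same, add_zero, integral_add (hρ'I.mono_set hsub') (hρI.mono_set hsub'),
      hAC x (hsub hx)]
    ring
  · filter_upwards [(ae_restrict_iff' measurableSet_Icc).1 hineq] with x hx hxt
    have hρ'x := hx (hsub hxt)
    nlinarith [hR hxt, hρ0 x (hsub hxt), le_max_left (b₁ x) (b₂ x), le_max_right (b₁ x) (b₂ x)]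

/-- **Extended continuous-time Gronwall inequality** (Lemma 2.4).
Let `ρ : [T₀,T] → ℝ≥0` be absolutely continuous (encoded via its a.e. derivative `ρ'`,
integrable on `[T₀,T]`, with `ρ t = ρ T₀ + ∫_{T₀}^{t} ρ'`), and let `a, b₁, b₂ ≥ 0`
be integrable on `[T₀,T]`.  If `ρ'(t) ≤ a t + b₁ t * ρ t + b₂ t * ∫_{T₀}^{t} ρ`
for a.e. `t ∈ [T₀,T]`, then with `b := max b₁ b₂`, for every `t ∈ [T₀,T]`,
`ρ t ≤ ρ T₀ * exp (∫_{T₀}^{t} (b+1)) + ∫_{T₀}^{t} a s * exp (∫_{s}^{t} (b+1)) ds`. -/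
theorem extended_gronwall (T₀ T : ℝ) (hT : T₀ < T) (ρ ρ' a b₁ b₂ : ℝ → ℝ)
    (hρ0 : ∀ t ∈ Set.Icc T₀ T, 0 ≤ ρ t)
    (hρ'int : IntegrableOn ρ' (Set.Icc T₀ T))
    (hAC : ∀ t ∈ Set.Icc T₀ T, ρ t = ρ T₀ + ∫ s in T₀..t, ρ' s)
    (ha0 : ∀ t ∈ Set.Icc T₀ T, 0 ≤ a t)
    (hb₁0 : ∀ t ∈ Set.Icc T₀ T, 0 ≤ b₁ t)
    (hb₂0 : ∀ t ∈ Set.Icc T₀ T, 0 ≤ b₂ t)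
    (haint : IntegrableOn a (Set.Icc T₀ T))
    (hb₁int : IntegrableOn b₁ (Set.Icc T₀ T))
    (hb₂int : IntegrableOn b₂ (Set.Icc T₀ T))
    (hineq : ∀ᵐ t ∂(volume.restrict (Set.Icc T₀ T)),
      ρ' t ≤ a t + b₁ t * ρ t + b₂ t * ∫ s in T₀..t, ρ s) :
    ∀ t ∈ Set.Icc T₀ T,
      ρ t ≤ ρ T₀ * Real.exp (∫ τ in T₀..t, (max (b₁ τ) (b₂ τ) + 1)) +
        ∫ s in T₀..t, a s * Real.exp (∫ τ in s..t, (max (b₁ τ) (b₂ τ) + 1)) :=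
  extended_gronwall_general T₀ T ρ ρ' a b₁ b₂ hρ0 hρ'int hAC haint hb₁int hb₂int hineq
end

section
/- Assume (H^F₁) with constant m_F ≥ 0 and (H^g₁) with constant β ≥ 0. Then every absolutely continuous solution x(·) of (D_{F,g}) satisfies the uniform a priori bounds 1 + ‖x(t)‖ ≤ M₁ := (1 + ‖x₀‖ + m_F/(β+1))·exp(T(β+1)) for all t ∈ [0,T], and ‖ẋ(t)‖ ≤ M₂ := m_F + βT·M₁ for a.e. t ∈ [0,T]. -/
/-!
The bound on `F` and the growth bound on `g` give `‖x' t‖ ≤ m_F + β ∫₀ᵗ (1 + ‖x‖)` a.e., so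
`u = 1 + ‖x‖` satisfies `u t ≤ 1 + ‖x₀‖ + m_F t + β ∫₀ᵗ ∫₀ˢ u`. Adding `∫₀ᵗ u` to the right-hand
side gives a `C¹` majorant `z` of `u` with `z' ≤ (β + 1) z + m_F`, and Grönwall's inequality for
`z` yields `u ≤ M₁`. Feeding this back into the derivative bound gives `M₂`.
-/

open MeasureTheory intervalIntegral Set

/-- `x` is an absolutely continuous solution of the integro-differential inclusion
`(D_{F,g})` on `[0,T]` with (a.e.) derivative `x'`:  `x 0 = x₀`, `x'` is integrable on
`[0,T]`, `x t = x₀ + ∫₀ᵗ x'`, and `x' t ∈ F t (x t) + ∫₀ᵗ g t s (x s) ds` a.e. on `[0,T]`. -/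
def IsSolutionOf (n : ℕ) (T : ℝ) (x₀ : EuclideanSpace ℝ (Fin n))
    (F : ℝ → EuclideanSpace ℝ (Fin n) → Set (EuclideanSpace ℝ (Fin n)))
    (g : ℝ → ℝ → EuclideanSpace ℝ (Fin n) → EuclideanSpace ℝ (Fin n))
    (x x' : ℝ → EuclideanSpace ℝ (Fin n)) : Prop :=
  x 0 = x₀ ∧ IntegrableOn x' (Set.Icc 0 T) ∧
    (∀ t ∈ Set.Icc (0 : ℝ) T, x t = x₀ + ∫ s in (0 : ℝ)..t, x' s) ∧
    (∀ᵐ t ∂(volume.restrict (Set.Icc (0 : ℝ) T)),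
      x' t - ∫ s in (0 : ℝ)..t, g t s (x s) ∈ F t (x t))

theorem gronwallBound_le_mul_exp {δ K ε : ℝ} (hK : 0 < K) (hε : 0 ≤ ε) (x : ℝ) :
    gronwallBound δ K ε x ≤ (δ + ε / K) * Real.exp (K * x) := by
  rw [gronwallBound_of_K_ne_0 hK.ne']
  have : 0 ≤ ε / K := div_nonneg hε hK.le
  linarith

theorem Continuous.le_gronwallBound_of_le_integral_integral {h : ℝ → ℝ} {A m β T : ℝ}
    (hc : Continuous h) (h0 : ∀ t ∈ Icc 0 T, 0 ≤ h t) (hβ : 0 ≤ β)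
    (hle : ∀ t ∈ Icc 0 T, h t ≤ A + m * t + β * ∫ s in 0..t, ∫ r in 0..s, h r) :
    ∀ t ∈ Icc 0 T, h t ≤ gronwallBound A (β + 1) m t := by
  set G : ℝ → ℝ := fun t => ∫ s in 0..t, h s
  set Ψ : ℝ → ℝ := fun t => ∫ s in 0..t, G s
  have hG : ∀ t, HasDerivAt G (h t) t := fun t => (hc.integral_hasStrictDerivAt 0 t).hasDerivAt
  have hGc : Continuous G := continuous_iff_continuousAt.2 fun t => (hG t).continuousAt
  have hΨ : ∀ t, HasDerivAt Ψ (G t) t := fun t => (hGc.integral_hasStrictDerivAt 0 t).hasDerivAt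
  have hG0 : ∀ t ∈ Icc 0 T, 0 ≤ G t := fun t ht =>
    integral_nonneg ht.1 fun s hs => h0 s ⟨hs.1, hs.2.trans ht.2⟩
  set z : ℝ → ℝ := fun t => A + m * t + β * Ψ t + G t
  have hz : ∀ t, HasDerivAt z (m + β * G t + h t) t := fun t =>
    ((((hasDerivAt_id t).const_mul m).const_add A).add ((hΨ t).const_mul β)).add (hG t)
      |>.congr_deriv (by ring)
  have hzc : Continuous z := continuous_iff_continuousAt.2 fun t => (hz t).continuousAt
  have hz_bound : ∀ t ∈ Ico 0 T, m + β * G t + h t ≤ (β + 1) * z t + m := by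
    intro t ht
    have ht' := Ico_subset_Icc_self ht
    linarith [hle t ht', hG0 t ht', mul_nonneg hβ ((h0 t ht').trans (hle t ht'))]
  have hz_le := le_gronwallBound_of_liminf_deriv_right_le (δ := A) hzc.continuousOn
    (fun t _ r hr => (hz t).hasDerivWithinAt.liminf_right_slope_le hr) (by simp [z, G, Ψ]) hz_bound
  intro t ht
  calc h t ≤ z t := by linarith [hle t ht, hG0 t ht]
    _ ≤ gronwallBound A (β + 1) m t := by simpa using hz_le t ht

theorem ContinuousOn.le_gronwallBound_of_le_integral_integral {h : ℝ → ℝ} {A m β T : ℝ}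
    (hc : ContinuousOn h (Icc 0 T)) (h0 : ∀ t ∈ Icc 0 T, 0 ≤ h t) (hβ : 0 ≤ β)
    (hle : ∀ t ∈ Icc 0 T, h t ≤ A + m * t + β * ∫ s in 0..t, ∫ r in 0..s, h r) :
    ∀ t ∈ Icc 0 T, h t ≤ gronwallBound A (β + 1) m t := by
  rcases lt_or_ge T 0 with hT | hT
  · simp [Icc_eq_empty_of_lt hT]
  set h' : ℝ → ℝ := fun t => h (projIcc 0 T hT t)
  have hh' : EqOn h' h (Icc 0 T) := fun t ht => by simp [h', projIcc_of_mem hT ht]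
  have hint : ∀ t ∈ Icc 0 T,
      ∫ s in 0..t, ∫ r in 0..s, h' r = ∫ s in 0..t, ∫ r in 0..s, h r := fun t ht => by
    refine integral_congr fun s hs => integral_congr fun r hr => hh' ?_
    rw [uIcc_of_le ht.1] at hs
    rw [uIcc_of_le hs.1] at hr
    exact ⟨hr.1, hr.2.trans (hs.2.trans ht.2)⟩
  have hc' : Continuous h' :=
    hc.comp_continuous (continuous_subtype_val.comp continuous_projIcc) fun t =>
      (projIcc 0 T hT t).2
  intro t ht
  rw [← hh' ht]
  refine hc'.le_gronwallBound_of_le_integral_integral (fun s hs => ?_) hβ (fun s hs => ?_) t ht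
  · exact (hh' hs).symm ▸ h0 s hs
  · rw [hint s hs, hh' hs]
    exact hle s hs

namespace IsSolutionOf

variable {n : ℕ} {T : ℝ} {x₀ : EuclideanSpace ℝ (Fin n)}
  {F : ℝ → EuclideanSpace ℝ (Fin n) → Set (EuclideanSpace ℝ (Fin n))}
  {g : ℝ → ℝ → EuclideanSpace ℝ (Fin n) → EuclideanSpace ℝ (Fin n)}
  {x x' : ℝ → EuclideanSpace ℝ (Fin n)}

theorem continuousOn (hsol : IsSolutionOf n T x₀ F g x x') : ContinuousOn x (Icc 0 T) := by
  obtain ⟨-, hint, hx, -⟩ := hsol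
  refine (continuousOn_const (c := x₀) |>.add (continuousOn_primitive hint)).congr fun t ht => ?_
  rw [hx t ht, integral_of_le ht.1]
  rfl

theorem intervalIntegrable_one_add_norm (hsol : IsSolutionOf n T x₀ F g x x') {t : ℝ}
    (ht : t ∈ Icc 0 T) : IntervalIntegrable (fun s => 1 + ‖x s‖) volume 0 t := by
  refine ContinuousOn.intervalIntegrable ?_
  rw [uIcc_of_le ht.1]
  exact (continuousOn_const.add hsol.continuousOn.norm).mono (Icc_subset_Icc_right ht.2)

theorem norm_le_add_integral_norm_deriv (hsol : IsSolutionOf n T x₀ F g x x') {t : ℝ}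
    (ht : t ∈ Icc 0 T) : ‖x t‖ ≤ ‖x₀‖ + ∫ s in 0..t, ‖x' s‖ := by
  rw [hsol.2.2.1 t ht]
  exact (norm_add_le _ _).trans
    (by gcongr; exact intervalIntegral.norm_integral_le_integral_norm ht.1)

theorem ae_norm_deriv_le {m_F β : ℝ} (hsol : IsSolutionOf n T x₀ F g x x')
    (hF1 : ∀ t ∈ Icc (0 : ℝ) T, ∀ y, F t y ⊆ Metric.closedBall 0 m_F)
    (hg1 : ∀ t ∈ Icc (0 : ℝ) T, ∀ s ∈ Icc (0 : ℝ) t, ∀ y, ‖g t s y‖ ≤ β * (1 + ‖y‖)) :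
    ∀ᵐ t ∂(volume.restrict (Icc 0 T)), ‖x' t‖ ≤ m_F + β * ∫ s in 0..t, (1 + ‖x s‖) := by
  filter_upwards [hsol.2.2.2, ae_restrict_mem measurableSet_Icc] with t hF ht
  have hFt : ‖x' t - ∫ s in 0..t, g t s (x s)‖ ≤ m_F := by simpa using hF1 t ht _ hF
  have hgt : ‖∫ s in 0..t, g t s (x s)‖ ≤ β * ∫ s in 0..t, (1 + ‖x s‖) := by
    rw [← intervalIntegral.integral_const_mul]
    exact norm_integral_le_of_norm_le ht.1
      (.of_forall fun s hs => hg1 t ht s (Ioc_subset_Icc_self hs) _)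
      ((hsol.intervalIntegrable_one_add_norm ht).const_mul β)
  linarith [norm_le_norm_add_norm_sub' (x' t) (∫ s in 0..t, g t s (x s))]

theorem one_add_norm_le_integral_integral {m_F β : ℝ} (hsol : IsSolutionOf n T x₀ F g x x')
    (hF1 : ∀ t ∈ Icc (0 : ℝ) T, ∀ y, F t y ⊆ Metric.closedBall 0 m_F)
    (hg1 : ∀ t ∈ Icc (0 : ℝ) T, ∀ s ∈ Icc (0 : ℝ) t, ∀ y, ‖g t s y‖ ≤ β * (1 + ‖y‖))
    {t : ℝ} (ht : t ∈ Icc 0 T) :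
    1 + ‖x t‖ ≤ 1 + ‖x₀‖ + m_F * t + β * ∫ s in 0..t, ∫ r in 0..s, (1 + ‖x r‖) := by
  have hT : 0 ≤ T := ht.1.trans ht.2
  have hprim : ContinuousOn (fun s => ∫ r in 0..s, (1 + ‖x r‖)) (Icc 0 T) := by
    have := continuousOn_primitive_interval'
      (hsol.intervalIntegrable_one_add_norm ⟨hT, le_rfl⟩) left_mem_uIcc
    rwa [uIcc_of_le hT] at this
  have hprim_int : IntervalIntegrable (fun s => ∫ r in 0..s, (1 + ‖x r‖)) volume 0 t := by
    refine ContinuousOn.intervalIntegrable ?_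
    rw [uIcc_of_le ht.1]
    exact hprim.mono (Icc_subset_Icc_right ht.2)
  have hmono : ∫ s in 0..t, ‖x' s‖ ≤ ∫ s in 0..t, (m_F + β * ∫ r in 0..s, (1 + ‖x r‖)) := by
    refine integral_mono_ae_restrict ht.1 (IntegrableOn.intervalIntegrable ?_)
      (intervalIntegrable_const.add (hprim_int.const_mul β))
      (ae_restrict_of_ae_restrict_of_subset (Icc_subset_Icc_right ht.2)
        (hsol.ae_norm_deriv_le hF1 hg1))
    rw [uIcc_of_le ht.1]
    exact IntegrableOn.mono_set hsol.2.1.norm (Icc_subset_Icc_right ht.2)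
  rw [intervalIntegral.integral_add intervalIntegrable_const (hprim_int.const_mul β),
    intervalIntegral.integral_const, intervalIntegral.integral_const_mul, sub_zero,
    smul_eq_mul] at hmono
  linarith [hsol.norm_le_add_integral_norm_deriv ht]

end IsSolutionOf

theorem solution_apriori_bounds_general (n : ℕ) (T : ℝ)
    (x₀ : EuclideanSpace ℝ (Fin n))
    (F : ℝ → EuclideanSpace ℝ (Fin n) → Set (EuclideanSpace ℝ (Fin n)))
    (g : ℝ → ℝ → EuclideanSpace ℝ (Fin n) → EuclideanSpace ℝ (Fin n))
    (m_F β : ℝ) (hm_F : 0 ≤ m_F) (hβ : 0 ≤ β)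
    (hF1 : ∀ t ∈ Set.Icc (0 : ℝ) T, ∀ y, F t y ⊆ Metric.closedBall 0 m_F)
    (hg1 : ∀ t ∈ Set.Icc (0 : ℝ) T, ∀ s ∈ Set.Icc (0 : ℝ) t, ∀ y,
      ‖g t s y‖ ≤ β * (1 + ‖y‖))
    (x x' : ℝ → EuclideanSpace ℝ (Fin n))
    (hsol : IsSolutionOf n T x₀ F g x x') :
    (∀ t ∈ Set.Icc (0 : ℝ) T,
      1 + ‖x t‖ ≤ (1 + ‖x₀‖ + m_F / (β + 1)) * Real.exp (T * (β + 1))) ∧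
    (∀ᵐ t ∂(volume.restrict (Set.Icc (0 : ℝ) T)),
      ‖x' t‖ ≤ m_F + β * T * ((1 + ‖x₀‖ + m_F / (β + 1)) * Real.exp (T * (β + 1)))) := by
  have hK : 0 < β + 1 := by linarith
  set M₁ := (1 + ‖x₀‖ + m_F / (β + 1)) * Real.exp (T * (β + 1))
  have hM₁ : ∀ t ∈ Icc 0 T, 1 + ‖x t‖ ≤ M₁ := fun t ht =>
    calc 1 + ‖x t‖ ≤ gronwallBound (1 + ‖x₀‖) (β + 1) m_F t :=
          (continuousOn_const.add hsol.continuousOn.norm).le_gronwallBound_of_le_integral_integral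
            (fun _ _ => add_nonneg zero_le_one (norm_nonneg _)) hβ
            (fun _ hs => hsol.one_add_norm_le_integral_integral hF1 hg1 hs) t ht
      _ ≤ gronwallBound (1 + ‖x₀‖) (β + 1) m_F T :=
          gronwallBound_mono (by positivity) hm_F hK.le ht.2
      _ ≤ M₁ := (gronwallBound_le_mul_exp hK hm_F T).trans_eq (by rw [mul_comm (β + 1) T])
  refine ⟨hM₁, ?_⟩
  filter_upwards [hsol.ae_norm_deriv_le hF1 hg1, ae_restrict_mem measurableSet_Icc] with t hx' ht
  have hM₁_int : ∫ s in 0..t, (1 + ‖x s‖) ≤ T * M₁ :=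
    calc ∫ s in 0..t, (1 + ‖x s‖) ≤ ∫ _ in 0..t, M₁ :=
          integral_mono_on ht.1 (hsol.intervalIntegrable_one_add_norm ht) intervalIntegrable_const
            fun s hs => hM₁ s ⟨hs.1, hs.2.trans ht.2⟩
      _ = t * M₁ := by simp
      _ ≤ T * M₁ := mul_le_mul_of_nonneg_right ht.2
          ((add_nonneg zero_le_one (norm_nonneg _)).trans (hM₁ t ht))
  calc ‖x' t‖ ≤ m_F + β * ∫ s in 0..t, (1 + ‖x s‖) := hx'
    _ ≤ m_F + β * (T * M₁) := by gcongr
    _ = _ := by ring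

/-- **A priori bounds for solutions of integro-differential inclusions** (part of
Theorem 3.1).  Under the boundedness hypotheses `(H^F₁)` and `(H^g₁)`, every solution
`x` of `(D_{F,g})` satisfies `1 + ‖x t‖ ≤ M₁ := (1+‖x₀‖+m_F/(β+1)) * exp (T(β+1))` on
`[0,T]` and `‖x' t‖ ≤ M₂ := m_F + βT·M₁` a.e. on `[0,T]`. -/
theorem solution_apriori_bounds (n : ℕ) (T : ℝ) (hT : 0 < T)
    (x₀ : EuclideanSpace ℝ (Fin n))
    (F : ℝ → EuclideanSpace ℝ (Fin n) → Set (EuclideanSpace ℝ (Fin n)))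
    (g : ℝ → ℝ → EuclideanSpace ℝ (Fin n) → EuclideanSpace ℝ (Fin n))
    (m_F β : ℝ) (hm_F : 0 ≤ m_F) (hβ : 0 ≤ β)
    (hF1 : ∀ t ∈ Set.Icc (0 : ℝ) T, ∀ y, F t y ⊆ Metric.closedBall 0 m_F)
    (hg1 : ∀ t ∈ Set.Icc (0 : ℝ) T, ∀ s ∈ Set.Icc (0 : ℝ) t, ∀ y,
      ‖g t s y‖ ≤ β * (1 + ‖y‖))
    (x x' : ℝ → EuclideanSpace ℝ (Fin n))
    (hsol : IsSolutionOf n T x₀ F g x x') :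
    (∀ t ∈ Set.Icc (0 : ℝ) T,
      1 + ‖x t‖ ≤ (1 + ‖x₀‖ + m_F / (β + 1)) * Real.exp (T * (β + 1))) ∧
    (∀ᵐ t ∂(volume.restrict (Set.Icc (0 : ℝ) T)),
      ‖x' t‖ ≤ m_F + β * T * ((1 + ‖x₀‖ + m_F / (β + 1)) * Real.exp (T * (β + 1)))) :=
  solution_apriori_bounds_general n T x₀ F g m_F β hm_F hβ hF1 hg1 x x' hsol
end
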